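/- arXiv:1203.4022 — 2 statements merged into one kernel-verified Lean document; each statement's English description precedes it below -/
import Mathlib

section
/- Let K be a field of characteristic 0 equipped with a discrete valuation ν, with associated valuation ring O_ν ⊆ K. For any units a_1, …, a_n ∈ K^×, there exist b_1, …, b_n ∈ K^× such that b_1, …, b_{n−1} are units of the valuation ring O_ν and such that the n-fold Pfister forms ⟨⟨a_1, …, a_n⟩⟩ and ⟨⟨b_1, …, b_n⟩⟩ are isometric as quadratic forms over K. -/
/-!
Scaling entries by nonzero squares and permuting them does not change a Pfister form, so every
entry may be taken to be a unit `u` of `O` or `π u` for a uniformizer `π`. The isometry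
`⟨⟨x, y⟩⟩ ≅ ⟨⟨x, -xy⟩⟩` turns a pair of entries `π u, π v` into `π u, -π² u v`, hence into
`π u` and the unit `-u v`. Repeating this leaves at most one non-unit entry, which a permutation
moves to the last slot.
-/

/-- The `n`-fold Pfister form `⟨⟨a 0, …, a (n-1)⟩⟩ = ⟨1, -a 0⟩ ⊗ ⋯ ⊗ ⟨1, -a (n-1)⟩`,
realized (via the canonical identification of the `n`-fold tensor product of copies of `K²`
with `K^(Fin n → Bool)`) as the diagonal quadratic form whose coefficient on the coordinate
indexed by `s : Fin n → Bool` is `∏ i, (if s i then -a i else 1)`, i.e. the product of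
`-a i` over the subset `{i | s i}`. -/
noncomputable def pfisterForm {K : Type*} [Field K] {n : ℕ} (a : Fin n → K) :
    QuadraticForm K ((Fin n → Bool) → K) :=
  QuadraticMap.weightedSumSquares K
    (fun s : Fin n → Bool => ∏ i : Fin n, if s i then -a i else 1)

open QuadraticMap Finset

section WeightedSumSquares

variable {K ι : Type*} [Field K] [Fintype ι]

theorem weightedSumSquares_equivalent_comp_perm (w : ι → K) (σ : Equiv.Perm ι) :
    (weightedSumSquares K w).Equivalent (weightedSumSquares K (w ∘ σ)) := by
  have hcomp : (weightedSumSquares K w).comp (LinearEquiv.funCongrLeft K K σ.symm : _ →ₗ[K] _) =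
      weightedSumSquares K (w ∘ σ) := by
    ext x
    simp only [comp_apply, weightedSumSquares_apply, LinearEquiv.coe_coe,
      LinearEquiv.funCongrLeft_apply, LinearMap.funLeft_apply, Function.comp_apply]
    exact (Equiv.sum_comp σ _).symm.trans (by simp)
  exact hcomp ▸ ⟨isometryEquivOfCompLinearEquiv _ _⟩

theorem weightedSumSquares_equivalent_mul_sq (w c : ι → K) (hc : ∀ i, c i ≠ 0) :
    (weightedSumSquares K w).Equivalent (weightedSumSquares K fun i => w i * c i ^ 2) :=
  ⟨QuadraticForm.isometryEquivWeightedSumSquaresWeightedSumSquares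
    (fun i => (Units.mk0 (c i) (hc i))⁻¹) fun i => by simp [hc i]⟩

end WeightedSumSquares

section Pfister

variable {K : Type*} [Field K] {n : ℕ}

theorem pfisterForm_equivalent_mul_sq (a c : Fin n → K) (hc : ∀ i, c i ≠ 0) :
    (pfisterForm a).Equivalent (pfisterForm fun i => a i * c i ^ 2) := by
  unfold pfisterForm
  convert weightedSumSquares_equivalent_mul_sq _
    (fun s : Fin n → Bool => ∏ i, if s i then c i else 1)
    fun s => prod_ne_zero_iff.2 fun i _ => by split_ifs <;> simp [hc i] using 2
  funext s
  rw [← prod_pow, ← prod_mul_distrib]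
  refine prod_congr rfl fun i _ => ?_
  split_ifs <;> ring

theorem pfisterForm_equivalent_comp_perm (a : Fin n → K) (σ : Equiv.Perm (Fin n)) :
    (pfisterForm a).Equivalent (pfisterForm (a ∘ σ)) := by
  unfold pfisterForm
  convert weightedSumSquares_equivalent_comp_perm _ (σ.arrowCongr (Equiv.refl Bool)) using 2
  funext s
  exact Fintype.prod_equiv σ _ _ fun i => by simp

/-- The coordinate involution `s ↦ s[i ↦ s i xor s j]` matches the weights of the two forms up to
the square factor `a i ^ 2`, which occurs where `s i = s j = true`. -/
theorem pfisterForm_equivalent_update_neg_mul (a : Fin n → K) {i j : Fin n} (hij : i ≠ j)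
    (hai : a i ≠ 0) :
    (pfisterForm a).Equivalent (pfisterForm (Function.update a j (-a i * a j))) := by
  set f : (Fin n → Bool) → (Fin n → Bool) := fun s => Function.update s i (xor (s i) (s j))
  have hf : Function.Involutive f := fun s => by
    ext k
    rcases eq_or_ne k i with rfl | hk
    · simp [f, Function.update_of_ne hij.symm]
    · simp [f, Function.update_of_ne hk]
  unfold pfisterForm
  refine (weightedSumSquares_equivalent_comp_perm _ hf.toPerm).trans ?_
  convert weightedSumSquares_equivalent_mul_sq _
    (fun s : Fin n → Bool => if s i && s j then a i else 1)
    fun s => by split_ifs <;> simp [hai] using 2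
  funext s
  simp only [Function.comp_apply, Function.Involutive.coe_toPerm]
  rw [← prod_sdiff (subset_univ {i, j}), prod_pair hij, ← prod_sdiff (subset_univ {i, j}),
    prod_pair hij]
  have hrest : ∀ k ∈ univ \ {i, j}, (if s k then -Function.update a j (-a i * a j) k else 1) =
      if f s k then -a k else 1 := fun k hk => by
    simp only [mem_sdiff, mem_insert, mem_singleton, not_or] at hk
    simp [f, Function.update_of_ne hk.2.1, Function.update_of_ne hk.2.2]
  rw [prod_congr rfl hrest]
  generalize ∏ k ∈ univ \ {i, j}, (if f s k then -a k else 1) = P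
  simp only [f, Function.update_self, Function.update_of_ne hij.symm, Function.update_of_ne hij]
  cases s i <;> cases s j <;> simp
  ring

theorem pfisterForm_equivalent_update_neg_mul_of_eq_mul (b : Fin n → K) {i j : Fin n}
    (hij : i ≠ j) {π u v : K} (hπ : π ≠ 0) (hu : u ≠ 0) (hbi : b i = π * u) (hbj : b j = π * v) :
    (pfisterForm b).Equivalent (pfisterForm (Function.update b j (-(u * v)))) := by
  refine (pfisterForm_equivalent_update_neg_mul b hij (by simp [hbi, hπ, hu])).trans ?_
  convert pfisterForm_equivalent_mul_sq _ (Function.update 1 j π⁻¹)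
    fun k => by by_cases hk : k = j <;> simp [hπ, hk] using 2
  ext k
  rcases eq_or_ne k j with rfl | hk
  · simp [hbi, hbj]
    field_simp
  · simp [hk]

end Pfister

theorem Fin.exists_perm_apply_notMem_of_subsingleton {n : ℕ} {S : Set (Fin n)}
    (hS : S.Subsingleton) : ∃ σ : Equiv.Perm (Fin n), ∀ i : Fin n, (i : ℕ) + 1 < n → σ i ∉ S := by
  by_cases hne : S.Nonempty
  · obtain ⟨x, hx⟩ := hne
    have hn := x.pos
    refine ⟨Equiv.swap x ⟨n - 1, by omega⟩, fun i hi hiS => ?_⟩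
    have hix : (i : ℕ) = n - 1 := by
      simpa using congrArg Fin.val (Equiv.swap_apply_eq_iff.1 (hS hiS hx))
    omega
  · exact ⟨1, fun i _ hiS => hne ⟨i, hiS⟩⟩

def IsUnitIn (R : Type*) {K : Type*} [CommRing R] [Field K] [Algebra R K] (x : K) : Prop :=
  ∃ u : Rˣ, algebraMap R K u = x

section UnitEntries

variable {R K : Type*} [CommRing R] [Field K] [Algebra R K]

theorem IsUnitIn.ne_zero {x : K} (hx : IsUnitIn R x) : x ≠ 0 := by
  obtain ⟨u, rfl⟩ := hx
  exact (u.map (algebraMap R K : R →* K)).ne_zero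

theorem exists_pfisterForm_equivalent_subsingleton_not_isUnitIn {n : ℕ} {π : K} (hπ : π ≠ 0)
    (b : Fin n → K) (hb : ∀ i, IsUnitIn R (b i) ∨ IsUnitIn R (b i / π)) :
    ∃ b' : Fin n → K, (∀ i, b' i ≠ 0) ∧ {i | ¬IsUnitIn R (b' i)}.Subsingleton ∧
      (pfisterForm b).Equivalent (pfisterForm b') := by
  classical
  induction hS : univ.filter (fun i => ¬IsUnitIn R (b i)) using Finset.strongInduction
    generalizing b with
  | _ S ih =>
  have hπunit : ∀ i ∈ S, IsUnitIn R (b i / π) := fun i hi =>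
    (hb i).resolve_left (by simpa [← hS] using hi)
  by_cases hsub : (S : Set (Fin n)).Subsingleton
  · refine ⟨b, fun i => ?_, hsub.anti fun i hi => by simpa [← hS] using hi, .refl _⟩
    rcases hb i with h | h
    · exact h.ne_zero
    · exact fun hbi => h.ne_zero (by simp [hbi])
  obtain ⟨i, hi, j, hj, hij⟩ := Set.not_subsingleton_iff.1 hsub
  obtain ⟨u, hu⟩ := hπunit i hi
  obtain ⟨v, hv⟩ := hπunit j hj
  set b' := Function.update b j (-(b i / π * (b j / π)))
  have hb'j : IsUnitIn R (b' j) := ⟨-(u * v), by simp [b', hu, hv]⟩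
  have hb' : ∀ k, IsUnitIn R (b' k) ∨ IsUnitIn R (b' k / π) := fun k => by
    rcases eq_or_ne k j with rfl | hk
    · exact .inl hb'j
    · simpa [b', hk] using hb k
  have hS' : univ.filter (fun k => ¬IsUnitIn R (b' k)) ⊂ S := by
    refine Finset.ssubset_of_subset_of_ssubset (fun k hk => ?_) (erase_ssubset hj)
    have hkj : k ≠ j := by rintro rfl; exact (mem_filter.1 hk).2 hb'j
    simp only [mem_filter, mem_univ, true_and, b', Function.update_of_ne hkj] at hk
    simp [← hS, hk, hkj]
  obtain ⟨b'', hb''0, hb''sub, hb''⟩ := ih _ hS' b' hb' rfl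
  refine ⟨b'', hb''0, hb''sub, .trans ?_ hb''⟩
  exact pfisterForm_equivalent_update_neg_mul_of_eq_mul b hij hπ (hπunit i hi).ne_zero
    (mul_div_cancel₀ _ hπ).symm (mul_div_cancel₀ _ hπ).symm

end UnitEntries

section DiscreteValuation

variable {R K : Type*} [CommRing R] [IsDomain R] [IsDiscreteValuationRing R] [Field K]
  [Algebra R K] [IsFractionRing R K] {ϖ : R}

theorem exists_mul_sq_isUnitIn_or_div_isUnitIn (hϖ : Irreducible ϖ) {x : K} (hx : x ≠ 0) :
    ∃ c : K, c ≠ 0 ∧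
      (IsUnitIn R (x * c ^ 2) ∨ IsUnitIn R (x * c ^ 2 / algebraMap R K ϖ)) := by
  obtain ⟨m, u, rfl⟩ := IsDiscreteValuationRing.exists_units_eq_smul_zpow_of_irreducible hϖ hx
  have hϖ' : algebraMap R K ϖ ≠ 0 := by simpa using hϖ.ne_zero
  refine ⟨algebraMap R K ϖ ^ (-(m / 2)), zpow_ne_zero _ hϖ', ?_⟩
  have hsq : (algebraMap R K ϖ ^ (-(m / 2))) ^ 2 = algebraMap R K ϖ ^ (-(2 * (m / 2))) := by
    rw [← zpow_natCast, ← zpow_mul]; ring_nf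
  rw [Units.smul_def, Algebra.smul_def, hsq, mul_assoc, ← zpow_add₀ hϖ', ← sub_eq_add_neg,
    ← Int.emod_def]
  rcases Int.emod_two_eq_zero_or_one m with h | h
  · exact Or.inl ⟨u, by simp [h]⟩
  · exact Or.inr ⟨u, by simp [h, hϖ']⟩

end DiscreteValuation

theorem pfister_form_unit_entries_general {K : Type*} [Field K]
    (O : Subring K) [IsDiscreteValuationRing O] [IsFractionRing O K]
    (n : ℕ) (a : Fin n → K) (ha : ∀ i, a i ≠ 0) :
    ∃ b : Fin n → K, (∀ i, b i ≠ 0) ∧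
      (∀ i : Fin n, (i : ℕ) + 1 < n → ∃ u : Oˣ, ((u : O) : K) = b i) ∧
      QuadraticMap.Equivalent (pfisterForm a) (pfisterForm b) := by
  obtain ⟨ϖ, hϖ⟩ := IsDiscreteValuationRing.exists_irreducible O
  choose c hc hac using fun i => exists_mul_sq_isUnitIn_or_div_isUnitIn hϖ (ha i)
  obtain ⟨b, hb0, hbunit, hb⟩ := exists_pfisterForm_equivalent_subsingleton_not_isUnitIn
    (by simpa using hϖ.ne_zero) _ hac
  obtain ⟨σ, hσ⟩ := Fin.exists_perm_apply_notMem_of_subsingleton hbunit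
  exact ⟨b ∘ σ, fun i => hb0 (σ i), fun i hi => not_not.1 (hσ i hi),
    (pfisterForm_equivalent_mul_sq a c hc).trans (hb.trans (pfisterForm_equivalent_comp_perm b σ))⟩

/-- Let `K` be a field of characteristic `0` and let `O ⊆ K` be a discrete valuation ring
with fraction field `K` (the valuation ring of a discrete valuation `ν` on `K`).  For any
`a 0, …, a (n-1) ∈ Kˣ` there exist `b 0, …, b (n-1) ∈ Kˣ` such that all but the last one,
i.e. `b 0, …, b (n-2)`, are units of the valuation ring `O`, and such that the `n`-fold
Pfister forms `⟨⟨a 0, …, a (n-1)⟩⟩` and `⟨⟨b 0, …, b (n-1)⟩⟩` are isometric over `K`. -/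
theorem pfister_form_unit_entries {K : Type*} [Field K] [CharZero K]
    (O : Subring K) [IsDomain O] [IsDiscreteValuationRing O] [IsFractionRing O K]
    (n : ℕ) (a : Fin n → K) (ha : ∀ i, a i ≠ 0) :
    ∃ b : Fin n → K, (∀ i, b i ≠ 0) ∧
      (∀ i : Fin n, (i : ℕ) + 1 < n → ∃ u : Oˣ, ((u : O) : K) = b i) ∧
      QuadraticMap.Equivalent (pfisterForm a) (pfisterForm b) :=
  pfister_form_unit_entries_general O n a ha
end

section
/- Let ℓ be a prime number, let n ≥ 2 be an integer, and let V be a 2n-dimensional vector space over the field F_ℓ = ℤ/ℓℤ with basis v_1, …, v_{2n}. Then the element ω = v_1 ∧ ⋯ ∧ v_n + v_{n+1} ∧ ⋯ ∧ v_{2n} of the n-th exterior power Λ^n V is not equal to v ∧ w for any vector v ∈ V and any element w ∈ Λ^{n−1} V. Consequently, if S ⊆ Λ^n V denotes the one-dimensional subspace spanned by ω, then the subgroup S_dec of S generated by the elements of S of the form v ∧ w with v ∈ V and w ∈ Λ^{n−1} V is a proper subgroup: S_dec ≠ S. -/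
/-!
If `ω = v ∧ w` then `v ∧ ω = 0`. Write `ω = e_I + e_J` with `I`, `J` disjoint of size `n ≥ 2`.
For `j ∉ I`, the `({j} ∪ I)`-minor of `v ∧ e_I` is `v_j`, while that of `v ∧ e_J` vanishes
because some `e_i` with `i ∈ J \ {j}` is zero on all the coordinates `{j} ∪ I`; symmetrically
for `j ∉ J`. Hence `v = 0`, so `ω = 0`, which is absurd. Decomposability is invariant under
scaling, so no nonzero element of the line `S` is decomposable and `S_dec = 0 ≠ S`.
-/

open ExteriorAlgebra

namespace ExteriorAlgebra

theorem ι_mul_ιMulti {R M : Type*} [CommRing R] [AddCommGroup M] [Module R M] (v : M) {k : ℕ}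
    (u : Fin k → M) : ι R v * ιMulti R k u = ιMulti R (k + 1) (Fin.cons v u) := by
  rw [ιMulti_succ_apply, Fin.cons_zero]
  rfl

variable (R : Type*) [CommRing R] {I : Type*} {k : ℕ}

noncomputable def coordMinor (σ : Fin k → I) : ExteriorAlgebra R (I → R) →ₗ[R] R :=
  liftAlternating <| Pi.single (M := fun i => (I → R) [⋀^Fin i]→ₗ[R] R) k
    (Matrix.detRowAlternating.compLinearMap (LinearMap.funLeft R R σ))

variable {R}

theorem coordMinor_ιMulti (σ : Fin k → I) (u : Fin k → I → R) :
    coordMinor R σ (ιMulti R k u) = (Matrix.of fun a b => u a (σ b)).det := by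
  rw [coordMinor, liftAlternating_apply_ιMulti, Pi.single_eq_same]
  rfl

theorem coordMinor_ιMulti_eq_zero {σ : Fin k → I} {u : Fin k → I → R} (a : Fin k)
    (h : ∀ b, u a (σ b) = 0) : coordMinor R σ (ιMulti R k u) = 0 := by
  rw [coordMinor_ιMulti]
  exact Matrix.det_eq_zero_of_row_eq_zero a h

variable [DecidableEq I]

theorem coordMinor_ιMulti_single {f : Fin k → I} (hf : f.Injective) :
    coordMinor R f (ιMulti R k fun a => Pi.single (f a) 1) = 1 := by
  have : (Matrix.of fun a b => (Pi.single (f a) 1 : I → R) (f b)) = 1 := by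
    ext a b
    simp [Pi.single_apply, Matrix.one_apply, hf.eq_iff, eq_comm]
  rw [coordMinor_ιMulti, this, Matrix.det_one]

theorem coordMinor_cons_ι_mul_ιMulti_single {f : Fin k → I} (hf : f.Injective) {j : I}
    (hj : ∀ a, f a ≠ j) (v : I → R) :
    coordMinor R (Fin.cons j f) (ι R v * ιMulti R k fun a => Pi.single (f a) 1) = v j := by
  have hid := coordMinor_ιMulti_single (R := R) hf
  rw [coordMinor_ιMulti] at hid
  -- Laplace expansion along the column indexed by `j`, where only the row `v` is nonzero
  rw [ι_mul_ιMulti, coordMinor_ιMulti, Matrix.det_succ_column_zero, Fin.sum_univ_succ]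
  simp [hj, Matrix.submatrix, hid]

theorem coordMinor_ιMulti_single_add_ιMulti_single {f g : Fin k → I} (hf : f.Injective)
    (hfg : ∀ a b, f a ≠ g b) (hk : 1 ≤ k) :
    coordMinor R f ((ιMulti R k fun a => Pi.single (f a) 1) +
      ιMulti R k fun a => Pi.single (g a) 1) = 1 := by
  rw [map_add, coordMinor_ιMulti_single hf,
    coordMinor_ιMulti_eq_zero ⟨0, hk⟩ fun b => Pi.single_eq_of_ne (hfg b _) _, add_zero]

theorem apply_eq_zero_of_ι_mul_ιMulti_single_add_eq_zero {f g : Fin k → I} (hf : f.Injective)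
    (hg : g.Injective) (hfg : ∀ a b, f a ≠ g b) (hk : 2 ≤ k) {v : I → R} {j : I}
    (hj : ∀ a, f a ≠ j)
    (h : ι R v * ((ιMulti R k fun a => Pi.single (f a) 1) +
      ιMulti R k fun a => Pi.single (g a) 1) = 0) : v j = 0 := by
  obtain ⟨a, hga⟩ : ∃ a, g a ≠ j := by
    by_contra! hgj
    have := hg ((hgj ⟨0, by omega⟩).trans (hgj ⟨1, by omega⟩).symm)
    simp [Fin.ext_iff] at this
  have hg_row : ∀ b, (Pi.single (g a) 1 : I → R) ((Fin.cons j f : Fin (k + 1) → I) b) = 0 :=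
    Fin.cases (Pi.single_eq_of_ne hga.symm _) fun b => Pi.single_eq_of_ne (hfg b a) _
  have := congrArg (coordMinor R (Fin.cons j f)) h
  rwa [mul_add, map_add, coordMinor_cons_ι_mul_ιMulti_single hf hj, ι_mul_ιMulti,
    coordMinor_ιMulti_eq_zero a.succ hg_row, add_zero, map_zero] at this

theorem eq_zero_of_ι_mul_ιMulti_single_add_eq_zero {f g : Fin k → I} (hf : f.Injective)
    (hg : g.Injective) (hfg : ∀ a b, f a ≠ g b) (hk : 2 ≤ k) {v : I → R}
    (h : ι R v * ((ιMulti R k fun a => Pi.single (f a) 1) +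
      ιMulti R k fun a => Pi.single (g a) 1) = 0) : v = 0 := by
  funext j
  by_cases hj : ∀ a, f a ≠ j
  · exact apply_eq_zero_of_ι_mul_ιMulti_single_add_eq_zero hf hg hfg hk hj h
  · obtain ⟨a, rfl⟩ := not_forall_not.mp hj
    rw [add_comm] at h
    exact apply_eq_zero_of_ι_mul_ιMulti_single_add_eq_zero hg hf (fun b c => (hfg c b).symm) hk
      (fun b => (hfg a b).symm) h

theorem ιMulti_single_add_ne_ι_mul [Nontrivial R] {f g : Fin k → I} (hf : f.Injective)
    (hg : g.Injective) (hfg : ∀ a b, f a ≠ g b) (hk : 2 ≤ k) (v : I → R)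
    (w : ExteriorAlgebra R (I → R)) :
    (ιMulti R k fun a => Pi.single (f a) 1) + (ιMulti R k fun a => Pi.single (g a) 1) ≠
      ι R v * w := by
  intro hω
  have hv : v = 0 := eq_zero_of_ι_mul_ιMulti_single_add_eq_zero hf hg hfg hk <| by
    rw [hω, ← mul_assoc, ι_sq_zero, zero_mul]
  have := coordMinor_ιMulti_single_add_ιMulti_single (R := R) hf hfg (by omega)
  rw [hω, hv, map_zero, zero_mul, map_zero] at this
  exact zero_ne_one this

end ExteriorAlgebra

theorem Submodule.span_setOf_mem_span_singleton_and_ne {K V : Type*} [Field K] [AddCommGroup V]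
    [Module K V] {x : V} (hx : x ≠ 0) {P : V → Prop} (hP : ∀ (c : K) y, P y → P (c • y))
    (hPx : ¬ P x) : span K {y | y ∈ span K {x} ∧ P y} ≠ span K {x} := by
  have hbot : span K {y | y ∈ span K {x} ∧ P y} = ⊥ := by
    refine (span_eq_bot).mpr ?_
    rintro _ ⟨hy, hPy⟩
    obtain ⟨c, rfl⟩ := mem_span_singleton.mp hy
    by_contra hc
    refine hPx ?_
    simpa [smul_smul, inv_mul_cancel₀ (left_ne_zero_of_smul hc)] using hP c⁻¹ _ hPy
  rwa [hbot, ne_comm, Ne, span_singleton_eq_bot]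

/-- Let `ℓ` be a prime, `n ≥ 2`, and let `V = (ZMod ℓ)^(2n)` with standard basis
`e i = Pi.single i 1`. Consider `ω = e 0 ∧ ⋯ ∧ e (n-1) + e n ∧ ⋯ ∧ e (2n-1) ∈ Λⁿ V`.
Then `ω` is not of the form `v ∧ w` with `v ∈ V` and `w ∈ Λ^{n-1} V`; consequently,
if `S ⊆ Λⁿ V` is the line spanned by `ω`, the subgroup `S_dec` of `S` generated by the
elements of `S` of the form `v ∧ w` is a proper subgroup of `S`. -/
theorem omega_not_decomposable (ℓ : ℕ) (hℓ : ℓ.Prime) (n : ℕ) (hn : 2 ≤ n) :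
    ∀ (e : Fin (2 * n) → (Fin (2 * n) → ZMod ℓ)), e = (fun i => Pi.single i 1) →
    ∀ ω : ExteriorAlgebra (ZMod ℓ) (Fin (2 * n) → ZMod ℓ),
    ω = ExteriorAlgebra.ιMulti (ZMod ℓ) n (fun i : Fin n => e ⟨(i : ℕ), by omega⟩) +
        ExteriorAlgebra.ιMulti (ZMod ℓ) n (fun i : Fin n => e ⟨n + (i : ℕ), by omega⟩) →
    (¬ ∃ (v : Fin (2 * n) → ZMod ℓ)
         (w : ExteriorAlgebra (ZMod ℓ) (Fin (2 * n) → ZMod ℓ)),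
         w ∈ ⋀[ZMod ℓ]^(n - 1) (Fin (2 * n) → ZMod ℓ) ∧
         ω = ExteriorAlgebra.ι (ZMod ℓ) v * w) ∧
    Submodule.span (ZMod ℓ)
        {x : ExteriorAlgebra (ZMod ℓ) (Fin (2 * n) → ZMod ℓ) |
          x ∈ Submodule.span (ZMod ℓ) ({ω} : Set _) ∧
          ∃ (v : Fin (2 * n) → ZMod ℓ)
            (w : ExteriorAlgebra (ZMod ℓ) (Fin (2 * n) → ZMod ℓ)),
            w ∈ ⋀[ZMod ℓ]^(n - 1) (Fin (2 * n) → ZMod ℓ) ∧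
            x = ExteriorAlgebra.ι (ZMod ℓ) v * w}
      ≠ Submodule.span (ZMod ℓ) ({ω} : Set _) := by
  intro e he ω hω
  subst he
  have : Fact ℓ.Prime := ⟨hℓ⟩
  have hf : Function.Injective fun i : Fin n => (⟨i, by omega⟩ : Fin (2 * n)) :=
    fun a b h => Fin.ext (Fin.mk.inj h)
  have hg : Function.Injective fun i : Fin n => (⟨n + i, by omega⟩ : Fin (2 * n)) :=
    fun a b h => Fin.ext (by simpa using h)
  have hfg : ∀ a b : Fin n, (⟨a, by omega⟩ : Fin (2 * n)) ≠ ⟨n + b, by omega⟩ :=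
    fun a b h => by have := Fin.mk.inj h; omega
  have hdec : ¬ ∃ v w, w ∈ ⋀[ZMod ℓ]^(n - 1) (Fin (2 * n) → ZMod ℓ) ∧ ω = ι (ZMod ℓ) v * w :=
    fun ⟨v, w, _, hvw⟩ => ιMulti_single_add_ne_ι_mul hf hg hfg hn v w (hω ▸ hvw)
  refine ⟨hdec, Submodule.span_setOf_mem_span_singleton_and_ne ?_ ?_ hdec⟩
  · simpa [hω] using ιMulti_single_add_ne_ι_mul (R := ZMod ℓ) hf hg hfg hn 0 0
  · rintro c _ ⟨v, w, hw, rfl⟩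
    exact ⟨c • v, w, hw, by rw [map_smul, smul_mul_assoc]⟩
end
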